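/- arXiv:0909.1828 — 5 statements merged into one kernel-verified Lean document; each statement's English description precedes it below -/
import Mathlib

section
/- If f : D → C is holomorphic on the open unit disk with |f(z)| ≤ 1 for all z, then the kernel K(z,w) = (1 - f(z)·conj(f(w)))/(1 - z·conj(w)) is positive semi-definite on D, i.e., for every finite set of points z_1,...,z_m in D and scalars c_1,...,c_m, the sum over i,j of c_i·conj(c_j)·K(z_i,z_j) is nonnegative. -/
/-!
Write `⟪u, v⟫` for the average of `u · v̄` over the unit circle. By Cauchy's formula the Szegő
kernel `k_w z = (1 - z w̄)⁻¹` reproduces values, `⟪u, k_w⟫ = u w`, for `u` holomorphic on a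
neighbourhood of the closed disc. For such `f`, points `zᵢ` and weights `cᵢ`, put
`g = ∑ c̄ⱼ k_{zⱼ}` and `h = ∑ conj (cⱼ f zⱼ) k_{zⱼ}`: the Gram form of the Pick kernel is
`‖g‖² - ‖h‖²`, and `⟪f h, g⟫ = ‖h‖²`. If `|f| ≤ 1` on the circle, then
`0 ≤ ‖g - f h‖² = ‖g‖² - 2 ‖h‖² + ‖f h‖² ≤ ‖g‖² - ‖h‖²`.
A function holomorphic only on the open disc is handled through its dilations `f (r ·)`, `r → 1`.
-/

open Complex Finset ComplexOrder

/-- A kernel `K` is positive semi-definite on a subset `D`. -/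
def IsPSDKernelOn {γ : Type*} (D : Set γ) (K : γ → γ → ℂ) : Prop :=
  ∀ (m : ℕ) (z : Fin m → γ), (∀ i, z i ∈ D) → ∀ c : Fin m → ℂ,
    0 ≤ ∑ i, ∑ j, c i * (starRingEnd ℂ) (c j) * K (z i) (z j)

open Metric Filter Topology Real
open scoped ComplexConjugate

noncomputable def szegoKernel (z w : ℂ) : ℂ := (1 - z * conj w)⁻¹

noncomputable def pickKernel (f : ℂ → ℂ) (z w : ℂ) : ℂ :=
  (1 - f z * conj (f w)) / (1 - z * conj w)

noncomputable def circleInner (u v : ℂ → ℂ) : ℂ :=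
  circleAverage (fun z => u z * conj (v z)) 0 1

lemma one_sub_mul_conj_ne_zero {z w : ℂ} (hz : ‖z‖ ≤ 1) (hw : ‖w‖ < 1) :
    1 - z * conj w ≠ 0 := by
  refine sub_ne_zero.mpr (fun h => ?_)
  have : ‖z * conj w‖ < 1 := by
    rw [norm_mul, RCLike.norm_conj]
    exact mul_lt_one_of_nonneg_of_lt_one_right hz (norm_nonneg w) hw
  simp [← h] at this

lemma differentiableOn_szegoKernel {w : ℂ} (hw : ‖w‖ < 1) :
    DifferentiableOn ℂ (szegoKernel · w) (closedBall 0 1) :=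
  (by fun_prop : Differentiable ℂ fun z => 1 - z * conj w).differentiableOn.inv
    fun _ hz => one_sub_mul_conj_ne_zero (mem_closedBall_zero_iff.mp hz) hw

-- Also covers `z = w`, where both sides are `0`.
lemma conj_szegoKernel_of_mem_sphere {z : ℂ} (hz : z ∈ sphere 0 1) (w : ℂ) :
    conj (szegoKernel z w) = z / (z - w) := by
  have hz0 : z ≠ 0 := ne_zero_of_mem_unit_sphere ⟨z, hz⟩
  have hconj : conj z = z⁻¹ := by
    rw [inv_def, normSq_eq_norm_sq, mem_sphere_zero_iff_norm.mp hz]; simp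
  rw [szegoKernel, map_inv₀, map_sub, map_one, map_mul, Complex.conj_conj, hconj,
    ← inv_div]
  congr 1
  field_simp

theorem DiffContOnCl.circleInner_szegoKernel {u : ℂ → ℂ} (hu : DiffContOnCl ℂ u (ball 0 1))
    {w : ℂ} (hw : w ∈ ball 0 1) : circleInner u (szegoKernel · w) = u w := by
  rw [← abs_one] at hu hw
  rw [circleInner, ← hu.circleAverage_smul_div hw]
  refine circleAverage_congr_sphere fun z hz => ?_
  rw [abs_one] at hz
  simp [conj_szegoKernel_of_mem_sphere hz, mul_comm]

lemma circleInner_self (u : ℂ → ℂ) :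
    circleInner u u = ((circleAverage (fun z => ‖u z‖ ^ 2) 0 1 : ℝ) : ℂ) := by
  simp only [circleInner, circleAverage, mul_conj', ← ofReal_pow,
    intervalIntegral.integral_ofReal, real_smul, smul_eq_mul, ofReal_mul]

lemma norm_sub_mul_sq_le {a b c : ℂ} (ha : ‖a‖ ≤ 1) :
    ‖c - a * b‖ ^ 2 ≤ ‖c‖ ^ 2 - 2 * (a * b * conj c).re + ‖b‖ ^ 2 := by
  have hab : ‖a * b‖ ^ 2 ≤ ‖b‖ ^ 2 := by
    rw [norm_mul]
    exact pow_le_pow_left₀ (by positivity) (mul_le_of_le_one_left (norm_nonneg b) ha) 2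
  have hexpand := norm_sub_sq (𝕜 := ℂ) c (a * b)
  simp only [RCLike.inner_apply, RCLike.re_to_complex] at hexpand
  linarith

theorem circleInner_self_le_of_circleInner_mul_eq {F g h : ℂ → ℂ}
    (hF : ContinuousOn F (sphere 0 1)) (hg : ContinuousOn g (sphere 0 1))
    (hh : ContinuousOn h (sphere 0 1)) (hF1 : ∀ z ∈ sphere 0 1, ‖F z‖ ≤ 1)
    (hFhg : circleInner (fun z => F z * h z) g = circleInner h h) :
    circleInner h h ≤ circleInner g g := by
  have hint {φ : ℂ → ℝ} (hφ : ContinuousOn φ (sphere 0 1)) : CircleIntegrable φ 0 1 :=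
    hφ.circleIntegrable zero_le_one
  have hcross : circleAverage (fun z => (F z * h z * conj (g z)).re) 0 1 =
      circleAverage (fun z => ‖h z‖ ^ 2) 0 1 :=
    calc circleAverage (fun z => (F z * h z * conj (g z)).re) 0 1
        = (circleInner (fun z => F z * h z) g).re :=
          reCLM.circleAverage_comp_comm (f := fun z => F z * h z * conj (g z))
            (ContinuousOn.circleIntegrable zero_le_one (by fun_prop))
      _ = circleAverage (fun z => ‖h z‖ ^ 2) 0 1 := by rw [hFhg, circleInner_self, ofReal_re]
  have hsq : 0 ≤ circleAverage
      (fun z => ‖g z‖ ^ 2 - 2 * (F z * h z * conj (g z)).re + ‖h z‖ ^ 2) 0 1 := by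
    refine (circleAverage_nonneg_of_nonneg fun z _ => sq_nonneg ‖g z - F z * h z‖).trans
      (circleAverage_mono (hint (by fun_prop)) (hint (by fun_prop)) fun z hz => ?_)
    exact norm_sub_mul_sq_le (hF1 z (by simpa using hz))
  have htwice := circleAverage_fun_smul (a := (2 : ℝ)) (c := 0) (R := 1)
    (f := fun z => (F z * h z * conj (g z)).re)
  simp only [smul_eq_mul] at htwice
  rw [circleAverage_fun_add (hint (by fun_prop)) (hint (by fun_prop)),
    circleAverage_fun_sub (hint (by fun_prop)) (hint (by fun_prop)), htwice, hcross] at hsq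
  rw [circleInner_self, circleInner_self, real_le_real]
  linarith

lemma DiffContOnCl.continuousOn_sphere {u : ℂ → ℂ} (hu : DiffContOnCl ℂ u (ball 0 1)) :
    ContinuousOn u (sphere 0 1) :=
  hu.continuousOn.mono (closure_ball (0 : ℂ) one_ne_zero ▸ sphere_subset_closedBall)

noncomputable def szegoSum {ι : Type*} [Fintype ι] (z d : ι → ℂ) (w : ℂ) : ℂ :=
  ∑ j, d j * szegoKernel w (z j)

lemma diffContOnCl_szegoSum {ι : Type*} [Fintype ι] {z : ι → ℂ} (hz : ∀ j, z j ∈ ball 0 1)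
    (d : ι → ℂ) : DiffContOnCl ℂ (szegoSum z d) (ball 0 1) :=
  DifferentiableOn.diffContOnCl_ball (DifferentiableOn.fun_sum fun j _ =>
    (differentiableOn_szegoKernel (mem_ball_zero_iff.mp (hz j))).const_mul (d j)) subset_rfl

theorem DiffContOnCl.circleInner_szegoSum {ι : Type*} [Fintype ι] {u : ℂ → ℂ}
    (hu : DiffContOnCl ℂ u (ball 0 1)) {z : ι → ℂ} (hz : ∀ j, z j ∈ ball 0 1) (d : ι → ℂ) :
    circleInner u (szegoSum z d) = ∑ j, conj (d j) * u (z j) := by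
  have hint (j : ι) :
      CircleIntegrable (fun w => conj (d j) • (u w * conj (szegoKernel w (z j)))) 0 1 := by
    have hu' := hu.continuousOn_sphere
    have hk := ((differentiableOn_szegoKernel (mem_ball_zero_iff.mp (hz j))).continuousOn).mono
      sphere_subset_closedBall
    exact ContinuousOn.circleIntegrable zero_le_one (by fun_prop)
  calc circleInner u (szegoSum z d)
      = Real.circleAverage
          (fun w => ∑ j, conj (d j) • (u w * conj (szegoKernel w (z j)))) 0 1 := by
        simp only [circleInner, szegoSum, map_sum, map_mul, Finset.mul_sum, smul_eq_mul,
          mul_left_comm]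
    _ = ∑ j, conj (d j) * u (z j) := by
        rw [circleAverage_fun_sum fun j _ => hint j]
        refine Finset.sum_congr rfl fun j _ => ?_
        rw [circleAverage_fun_smul, smul_eq_mul]
        exact congrArg (conj (d j) * ·) (hu.circleInner_szegoKernel (hz j))

theorem isPSDKernelOn_pickKernel {f : ℂ → ℂ} (hf : DiffContOnCl ℂ f (ball 0 1))
    (hb : ∀ z ∈ sphere 0 1, ‖f z‖ ≤ 1) : IsPSDKernelOn (ball 0 1) (pickKernel f) := by
  intro m z hz c
  have hg := diffContOnCl_szegoSum hz (fun j => conj (c j))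
  have hh := diffContOnCl_szegoSum hz (fun j => conj (c j * f (z j)))
  have hgg := hg.circleInner_szegoSum hz (fun j => conj (c j))
  have hhh := hh.circleInner_szegoSum hz (fun j => conj (c j * f (z j)))
  have hfhg := (hf.smul hh).circleInner_szegoSum hz (fun j => conj (c j))
  simp only [Complex.conj_conj, smul_eq_mul] at hgg hhh hfhg
  set g := szegoSum z fun j => conj (c j) with hg_def
  set h := szegoSum z fun j => conj (c j * f (z j)) with hh_def
  have hgram : ∑ i, ∑ j, c i * conj (c j) * pickKernel f (z i) (z j) =
      circleInner g g - circleInner h h := by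
    rw [hgg, hhh, ← Finset.sum_sub_distrib]
    refine Finset.sum_congr rfl fun i _ => ?_
    simp only [hg_def, hh_def, szegoSum, Finset.mul_sum, ← Finset.sum_sub_distrib]
    refine Finset.sum_congr rfl fun j _ => ?_
    simp only [pickKernel, szegoKernel, map_mul, div_eq_mul_inv]
    ring
  rw [hgram, sub_nonneg]
  refine circleInner_self_le_of_circleInner_mul_eq hf.continuousOn_sphere hg.continuousOn_sphere
    hh.continuousOn_sphere hb ?_
  rw [hfhg, hhh]
  simp only [mul_assoc]

theorem IsPSDKernelOn.comp {γ δ : Type*} {D : Set γ} {K : γ → γ → ℂ} (hK : IsPSDKernelOn D K)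
    (φ : δ → γ) : IsPSDKernelOn (φ ⁻¹' D) (fun z w => K (φ z) (φ w)) :=
  fun m z hz c => hK m (φ ∘ z) hz c

theorem IsPSDKernelOn.of_tendsto {γ ι : Type*} {l : Filter ι} [l.NeBot] {D : Set γ}
    {Ds : ι → Set γ} {K : γ → γ → ℂ} {Ks : ι → γ → γ → ℂ}
    (hpsd : ∀ᶠ i in l, IsPSDKernelOn (Ds i) (Ks i)) (hD : ∀ z ∈ D, ∀ᶠ i in l, z ∈ Ds i)
    (hK : ∀ z ∈ D, ∀ w ∈ D, Tendsto (fun i => Ks i z w) l (𝓝 (K z w))) :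
    IsPSDKernelOn D K := by
  intro m z hz c
  refine ge_of_tendsto (tendsto_finsetSum _ fun i _ => tendsto_finsetSum _ fun j _ =>
    (hK _ (hz i) _ (hz j)).const_mul _) ?_
  filter_upwards [hpsd, eventually_all.mpr fun i => hD _ (hz i)] with r hr hzr
  exact hr m z hzr c

theorem isPSDKernelOn_pickKernel_comp_mul {f : ℂ → ℂ} (hf : DifferentiableOn ℂ f (ball 0 1))
    (hb : ∀ z ∈ ball 0 1, ‖f z‖ ≤ 1) {r : ℝ} (hr0 : 0 ≤ r) (hr1 : r < 1) :
    IsPSDKernelOn (ball 0 1) (pickKernel fun z => f (r * z)) := by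
  have hmaps : Set.MapsTo (fun z : ℂ => r * z) (closedBall 0 1) (ball 0 1) := fun z hz => by
    rw [mem_closedBall_zero_iff] at hz
    rw [mem_ball_zero_iff, norm_mul, norm_real, Real.norm_of_nonneg hr0]
    nlinarith [norm_nonneg z]
  refine isPSDKernelOn_pickKernel ?_ fun z hz => hb _ (hmaps (sphere_subset_closedBall hz))
  exact (hf.comp (by fun_prop) hmaps).diffContOnCl_ball subset_rfl

theorem tendsto_pickKernel_comp_mul {f : ℂ → ℂ} {z w : ℂ} (hfz : ContinuousAt f z)
    (hfw : ContinuousAt f w) (hzw : 1 - z * conj w ≠ 0) :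
    Tendsto (fun r : ℝ => pickKernel (fun ζ => f (r * ζ)) (z / r) (w / r)) (𝓝 1)
      (𝓝 (pickKernel f z w)) := by
  have hdil (a : ℂ) : ContinuousAt (fun r : ℝ => (r : ℂ) * (a / r)) 1 := by
    fun_prop (disch := norm_num)
  have hfz' : ContinuousAt (fun r : ℝ => f (r * (z / r))) 1 :=
    hfz.comp_of_eq (hdil z) (by simp)
  have hfw' : ContinuousAt (fun r : ℝ => f (r * (w / r))) 1 :=
    hfw.comp_of_eq (hdil w) (by simp)
  have : ContinuousAt (fun r : ℝ => pickKernel (fun ζ => f (r * ζ)) (z / r) (w / r)) 1 := by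
    simp only [pickKernel]
    refine ContinuousAt.div
      (continuousAt_const.sub (hfz'.mul (continuous_conj.continuousAt.comp hfw')))
      (by fun_prop (disch := norm_num)) (by simpa using hzw)
  simpa [pickKernel] using this.tendsto

theorem pick_kernel_psd_one_variable (f : ℂ → ℂ)
    (hf : DifferentiableOn ℂ f {z : ℂ | ‖z‖ < 1})
    (hb : ∀ z : ℂ, ‖z‖ < 1 → ‖f z‖ ≤ 1) :
    IsPSDKernelOn {z : ℂ | ‖z‖ < 1}
      (fun z w => (1 - f z * (starRingEnd ℂ) (f w)) / (1 - z * (starRingEnd ℂ) w)) := by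
  have hball : {z : ℂ | ‖z‖ < 1} = ball 0 1 := by ext; simp
  rw [hball] at hf ⊢
  have hdil {z : ℂ} (hz : z ∈ ball 0 1) : ∀ᶠ r : ℝ in 𝓝[<] 1, z / r ∈ ball 0 1 := by
    have : Tendsto (fun r : ℝ => z / (r : ℂ)) (𝓝 1) (𝓝 z) := by
      simpa using (by fun_prop (disch := norm_num) :
        ContinuousAt (fun r : ℝ => z / (r : ℂ)) 1).tendsto
    exact (this.mono_left nhdsWithin_le_nhds).eventually (isOpen_ball.mem_nhds hz)
  refine IsPSDKernelOn.of_tendsto (l := 𝓝[<] (1 : ℝ))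
    (Ds := fun r => (· / (r : ℂ)) ⁻¹' ball 0 1)
    (Ks := fun r z w => pickKernel (fun ζ => f (r * ζ)) (z / r) (w / r)) ?_ (fun z => hdil) ?_
  · filter_upwards [Ioo_mem_nhdsLT one_pos] with r hr
    exact (isPSDKernelOn_pickKernel_comp_mul hf (fun z hz => hb z (mem_ball_zero_iff.mp hz))
      hr.1.le hr.2).comp _
  · intro z hz w hw
    have hcont {a : ℂ} (ha : a ∈ ball 0 1) : ContinuousAt f a :=
      (hf.differentiableAt (isOpen_ball.mem_nhds ha)).continuousAt
    exact (tendsto_pickKernel_comp_mul (hcont hz) (hcont hw) (one_sub_mul_conj_ne_zero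
      (mem_ball_zero_iff.mp hz).le (mem_ball_zero_iff.mp hw))).mono_left nhdsWithin_le_nhds
end

section
/- Let p ∈ C[z_1,...,z_d] have multidegree at most n with no zeros on the closed polydisk, p̃(z) = z^n·conj(p(1/conj(z))), and dμ = |p|^{-2}dσ on T^d. Then for every multi-index α ∈ Z_+^d with α ≥ n failing (i.e., α_j < n_j for some j) and every β ∈ Z_+^d, the functions z^α and z^β·p̃(z) are orthogonal in L²(μ): ∫_{T^d} z^α · conj(z^β·p̃(z)) · |p(z)|^{-2} dσ(z) = 0. -/
open MeasureTheory Complex Finset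

noncomputable instance : MeasurableSpace Circle := borel Circle
instance : BorelSpace Circle := ⟨rfl⟩

/-- The reflection `p̃(z) = z^n · conj(p(1/conj z₁, …, 1/conj z_d))`, as a function. -/
noncomputable def reflect {d : ℕ} (n : Fin d → ℕ) (p : MvPolynomial (Fin d) ℂ)
    (z : Fin d → ℂ) : ℂ :=
  (∏ j, z j ^ n j) *
    (starRingEnd ℂ) (MvPolynomial.eval (fun j => ((starRingEnd ℂ) (z j))⁻¹) p)

/-! On the torus `conj zᵢ = zᵢ⁻¹`, so the integrand is the complex conjugate of
`z ↦ z^(β + n - α) / p(z)`, a Laurent monomial divided by `p`. Its exponent in a coordinate `j`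
with `α j < n j` is positive, and `1 / p` is holomorphic in `z_j` on the closed unit disc, so by
Cauchy's theorem its integral over every circle `θ ↦ (…, e^{iθ} z_j, …)` vanishes. Averaging over
these rotations, which preserve the Haar measure, and applying Fubini shows that the integral over
the torus vanishes too. -/

open ComplexConjugate Metric

theorem MvPolynomial.differentiable_eval {𝕜 σ : Type*} [NontriviallyNormedField 𝕜]
    [CompleteSpace 𝕜] [Fintype σ] (p : MvPolynomial σ 𝕜) : Differentiable 𝕜 fun z => eval z p :=
  fun z => ((AnalyticOnNhd.eval_mvPolynomial p) z trivial).differentiableAt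

theorem Finset.prod_zpow_mulSingle_mul {ι G : Type*} [Fintype ι] [DecidableEq ι] [CommGroup G]
    (k : ι → ℤ) (j : ι) (u : G) (z : ι → G) :
    ∏ i, (Pi.mulSingle j u * z : ι → G) i ^ k i = u ^ k j * ∏ i, z i ^ k i := by
  simp only [Pi.mul_apply, mul_zpow, prod_mul_distrib]
  congr 1
  rw [Fintype.prod_eq_single j fun i hi => by simp [Pi.mulSingle_eq_of_ne hi]]
  simp

theorem Circle.coe_mulSingle_mul {ι : Type*} [DecidableEq ι] (j : ι) (u : Circle)
    (z : ι → Circle) :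
    (fun i => ((Pi.mulSingle j u * z : ι → Circle) i : ℂ)) =
      Function.update (fun i => (z i : ℂ)) j (u * z j) := by
  ext i
  rcases eq_or_ne i j with rfl | hij
  · simp
  · simp [hij]

theorem Circle.coe_pow_mul_conj_coe_pow (z : Circle) (a b : ℕ) :
    (z : ℂ) ^ a * conj ((z : ℂ) ^ b) = ((z ^ ((a : ℤ) - b) : Circle) : ℂ) := by
  rw [map_pow, ← Circle.coe_inv_eq_conj, Circle.coe_zpow, ← Circle.coe_pow, zpow_sub₀ (by simp)]
  simp [div_eq_mul_inv]

theorem DiffContOnCl.intervalIntegral_circleMap_pow_succ_smul_eq_zero {E : Type*}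
    [NormedAddCommGroup E] [NormedSpace ℂ E] {f : ℂ → E} {R : ℝ}
    (hR : 0 ≤ R) (hf : DiffContOnCl ℂ f (ball 0 R)) (k : ℕ) :
    ∫ θ in (0 : ℝ)..2 * Real.pi, circleMap 0 R θ ^ (k + 1) • f (circleMap 0 R θ) = 0 := by
  have hcauchy : ∮ z in C(0, R), z ^ k • f z = 0 :=
    ((differentiable_pow k).diffContOnCl.smul hf).circleIntegral_eq_zero hR
  have hcoeff (θ : ℝ) :
      circleMap 0 R θ * I * circleMap 0 R θ ^ k = I * circleMap 0 R θ ^ (k + 1) := by ring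
  simp only [circleIntegral, deriv_circleMap, smul_smul, hcoeff] at hcauchy
  simpa only [mul_smul, intervalIntegral.integral_smul, smul_eq_zero, I_ne_zero, false_or]
    using hcauchy

theorem integral_eq_zero_of_intervalIntegral_mul_left_eq_zero {G E : Type*} [Group G]
    [TopologicalSpace G] [IsTopologicalGroup G] [CompactSpace G] [SecondCountableTopology G]
    [MeasurableSpace G] [BorelSpace G] [NormedAddCommGroup E] [NormedSpace ℝ E] [CompleteSpace E]
    (σ : Measure G) [σ.IsMulLeftInvariant] [IsFiniteMeasure σ] {F : G → E} (hF : Continuous F)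
    {g : ℝ → G} (hg : Continuous g) {T : ℝ} (hT : 0 < T)
    (h : ∀ z, ∫ θ in (0 : ℝ)..T, F (g θ * z) = 0) : ∫ z, F z ∂σ = 0 := by
  obtain ⟨C, hC⟩ := isCompact_univ.exists_bound_of_continuousOn hF.continuousOn
  have hint : Integrable (Function.uncurry fun θ z => F (g θ * z))
      ((volume.restrict (Set.Ioc 0 T)).prod σ) :=
    Integrable.mono' (integrable_const C)
      (hF.comp ((hg.comp continuous_fst).mul continuous_snd)).aestronglyMeasurable
      (.of_forall fun x => hC _ (Set.mem_univ _))
  -- Fubini on `[0, T] × G`: each `z`-slice integrates to `∫ F` by invariance, each `θ`-slice to 0.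
  have hswap := integral_integral_swap hint
  simp only [integral_mul_left_eq_self, ← intervalIntegral.integral_of_le hT.le,
    intervalIntegral.integral_const, h, integral_zero] at hswap
  simpa [hT.ne'] using hswap

section Torus

variable {ι : Type*} [Fintype ι]

theorem diffContOnCl_inv_eval_update [DecidableEq ι] (p : MvPolynomial ι ℂ)
    (hp : ∀ z : ι → ℂ, (∀ j, ‖z j‖ ≤ 1) → MvPolynomial.eval z p ≠ 0)
    {w : ι → ℂ} (hw : ∀ i, ‖w i‖ ≤ 1) (j : ι) {c : ℂ} (hc : ‖c‖ ≤ 1) :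
    DiffContOnCl ℂ (fun ζ => (MvPolynomial.eval (Function.update w j (ζ * c)) p)⁻¹)
      (ball 0 1) := by
  have hupdate : Differentiable ℂ (Function.update w j) := fun y =>
    (hasFDerivAt_update w y).differentiableAt
  have hdiff : Differentiable ℂ fun ζ : ℂ => MvPolynomial.eval (Function.update w j (ζ * c)) p :=
    p.differentiable_eval.comp (hupdate.comp (differentiable_id.mul_const c))
  refine hdiff.diffContOnCl.inv fun ζ hζ => hp _ fun i => ?_
  rw [closure_ball 0 one_ne_zero, mem_closedBall_zero_iff] at hζ
  rcases eq_or_ne i j with rfl | hij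
  · simpa using mul_le_one₀ hζ (norm_nonneg _) hc
  · simpa [hij] using hw i

noncomputable def monomialDivEval (p : MvPolynomial ι ℂ) (k : ι → ℤ) (z : ι → Circle) : ℂ :=
  ((∏ i, z i ^ k i : Circle) : ℂ) / MvPolynomial.eval (fun i => (z i : ℂ)) p

theorem continuous_monomialDivEval {p : MvPolynomial ι ℂ}
    (hp : ∀ z : ι → Circle, MvPolynomial.eval (fun i => (z i : ℂ)) p ≠ 0) (k : ι → ℤ) :
    Continuous (monomialDivEval p k) := by
  have hcoe : Continuous ((↑) : Circle → ℂ) := continuous_subtype_val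
  exact (hcoe.comp (by fun_prop : Continuous fun z : ι → Circle => ∏ i, z i ^ k i)).div
    (p.continuous_eval.comp (continuous_pi fun i => hcoe.comp (continuous_apply i))) hp

theorem intervalIntegral_monomialDivEval_mulSingle_mul_eq_zero [DecidableEq ι]
    (p : MvPolynomial ι ℂ)
    (hp : ∀ z : ι → ℂ, (∀ j, ‖z j‖ ≤ 1) → MvPolynomial.eval z p ≠ 0)
    {k : ι → ℤ} {j : ι} (hk : 0 < k j) (z : ι → Circle) :
    ∫ θ in (0 : ℝ)..2 * Real.pi, monomialDivEval p k (Pi.mulSingle j (Circle.exp θ) * z) = 0 := by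
  obtain ⟨m, hm⟩ : ∃ m : ℕ, k j = (m + 1 : ℕ) := ⟨(k j - 1).toNat, by omega⟩
  set q : ℂ → ℂ := fun ζ =>
    (MvPolynomial.eval (Function.update (fun i => (z i : ℂ)) j (ζ * z j)) p)⁻¹
  have hrot : ∀ θ : ℝ, monomialDivEval p k (Pi.mulSingle j (Circle.exp θ) * z) =
      ((∏ i, z i ^ k i : Circle) : ℂ) • (circleMap 0 1 θ ^ (m + 1) • q (circleMap 0 1 θ)) := by
    intro θ
    rw [monomialDivEval, prod_zpow_mulSingle_mul, Circle.coe_mulSingle_mul, hm]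
    simp only [Circle.coe_mul, zpow_natCast, Circle.coe_pow, Circle.coe_exp, circleMap_zero,
      ofReal_one, one_mul, smul_eq_mul, div_eq_mul_inv, q]
    ring
  simp_rw [hrot, intervalIntegral.integral_smul]
  rw [(diffContOnCl_inv_eval_update p hp (fun i => (z i).norm_coe.le) j
    (z j).norm_coe.le).intervalIntegral_circleMap_pow_succ_smul_eq_zero zero_le_one, smul_zero]

end Torus

theorem reflect_coe_circle {d : ℕ} (n : Fin d → ℕ) (p : MvPolynomial (Fin d) ℂ)
    (z : Fin d → Circle) :
    reflect n p (fun j => (z j : ℂ)) =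
      (∏ j, (z j : ℂ) ^ n j) * conj (MvPolynomial.eval (fun j => (z j : ℂ)) p) := by
  simp only [reflect, ← Circle.coe_inv_eq_conj, ← Circle.coe_inv, inv_inv]

theorem prod_pow_mul_conj_prod_pow_mul_reflect_mul_inv_norm_sq {d : ℕ} (n : Fin d → ℕ)
    (p : MvPolynomial (Fin d) ℂ) (z : Fin d → Circle)
    (hz : MvPolynomial.eval (fun j => (z j : ℂ)) p ≠ 0) (α β : Fin d → ℕ) :
    (∏ j, (z j : ℂ) ^ α j) * conj ((∏ j, (z j : ℂ) ^ β j) * reflect n p (fun j => (z j : ℂ))) *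
        (((‖MvPolynomial.eval (fun j => (z j : ℂ)) p‖ ^ 2)⁻¹ : ℝ) : ℂ) =
      conj (monomialDivEval p (fun j => (β j + n j : ℤ) - α j) z) := by
  have hmono : (∏ j, (z j : ℂ) ^ α j) * conj ((∏ j, (z j : ℂ) ^ β j) * ∏ j, (z j : ℂ) ^ n j) =
      conj ((∏ j, z j ^ ((β j + n j : ℤ) - α j) : Circle) : ℂ) := by
    have hcoe : ∀ w : Fin d → Circle, ((∏ j, w j : Circle) : ℂ) = ∏ j, (w j : ℂ) :=
      fun w => map_prod Circle.coeHom w univ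
    simp only [hcoe, map_mul, map_prod, ← prod_mul_distrib]
    refine prod_congr rfl fun j _ => ?_
    simp only [← map_mul, ← pow_add, Circle.coe_pow_mul_conj_coe_pow, ← Circle.coe_inv_eq_conj,
      ← zpow_neg, neg_sub]
    push_cast
    ring_nf
  rw [reflect_coe_circle, monomialDivEval, map_div₀, ← hmono, ofReal_inv,
    ← normSq_eq_norm_sq, ← mul_conj]
  have hconj : conj (MvPolynomial.eval (fun j => (z j : ℂ)) p) ≠ 0 := by simpa using hz
  simp only [map_mul, conj_conj]
  field_simp

theorem monomials_orthogonal_to_reflected_general (d : ℕ) (n : Fin d → ℕ)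
    (p : MvPolynomial (Fin d) ℂ)
    (hp : ∀ z : Fin d → ℂ, (∀ j, ‖z j‖ ≤ 1) → MvPolynomial.eval z p ≠ 0)
    -- `σ` is the normalized Haar (Lebesgue) measure on the `d`-torus
    (σ : Measure (Fin d → Circle)) [σ.IsHaarMeasure]
    (α : Fin d → ℕ) (hα : ∃ j, α j < n j) (β : Fin d → ℕ) :
    ∫ z : Fin d → Circle,
        (∏ j, (z j : ℂ) ^ α j) *
          (starRingEnd ℂ) ((∏ j, (z j : ℂ) ^ β j) * reflect n p (fun j => (z j : ℂ))) *
          (((‖MvPolynomial.eval (fun j => (z j : ℂ)) p‖ ^ 2)⁻¹ : ℝ) : ℂ) ∂σ = 0 := by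
  obtain ⟨j, hj⟩ := hα
  have hP (z : Fin d → Circle) : MvPolynomial.eval (fun i => (z i : ℂ)) p ≠ 0 :=
    hp _ fun i => (z i).norm_coe.le
  set k : Fin d → ℤ := fun i => (β i + n i : ℤ) - α i
  have hkj : 0 < k j := by simp only [k]; omega
  simp_rw [prod_pow_mul_conj_prod_pow_mul_reflect_mul_inv_norm_sq n p _ (hP _), integral_conj]
  rw [integral_eq_zero_of_intervalIntegral_mul_left_eq_zero σ (continuous_monomialDivEval hP k)
    ((continuous_mulSingle j).comp Circle.exp.continuous) Real.two_pi_pos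
    (intervalIntegral_monomialDivEval_mulSingle_mul_eq_zero p hp hkj), map_zero]

theorem monomials_orthogonal_to_reflected (d : ℕ) (n : Fin d → ℕ)
    (p : MvPolynomial (Fin d) ℂ)
    (hdeg : ∀ m ∈ p.support, ∀ j, m j ≤ n j)
    (hp : ∀ z : Fin d → ℂ, (∀ j, ‖z j‖ ≤ 1) → MvPolynomial.eval z p ≠ 0)
    -- `σ` is the normalized Haar (Lebesgue) measure on the `d`-torus
    (σ : Measure (Fin d → Circle)) [σ.IsHaarMeasure] [IsProbabilityMeasure σ]
    (α : Fin d → ℕ) (hα : ∃ j, α j < n j) (β : Fin d → ℕ) :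
    ∫ z : Fin d → Circle,
        (∏ j, (z j : ℂ) ^ α j) *
          (starRingEnd ℂ) ((∏ j, (z j : ℂ) ^ β j) * reflect n p (fun j => (z j : ℂ))) *
          (((‖MvPolynomial.eval (fun j => (z j : ℂ)) p‖ ^ 2)⁻¹ : ℝ) : ℂ) ∂σ = 0 :=
  monomials_orthogonal_to_reflected_general d n p hp σ α hα β
end

section
/- Let p ∈ C[z_1,...,z_d] have multidegree at most n, p(0) ≠ 0, no zeros on the closed polydisk, p̃(z) = z^n·conj(p(1/conj(z))), and dμ = |p|^{-2}dσ on T^d. If f ∈ L²(μ) has Fourier support contained in {α ∈ Z_+^d : α ≥ n}, is orthogonal in L²(μ) to z^β·p̃ for every β ∈ Z_+^d, then f = 0. -/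
open MeasureTheory Complex Finset

/-!
On the torus `p̃ = z^n · conj p`, so `∫ f · conj (z^β p̃) dμ = ∫ f · conj (z^(n+β)) / conj p dσ`:
the function `g = f / conj p` has vanishing Fourier coefficients at every `γ ≥ n`. Multiplying
by `conj p = ∑ conj (c_m) conj (z^m)` only shifts frequencies upwards, so each coefficient of
`f = g · conj p` at `γ ≥ n` is a combination of coefficients of `g` at `γ + m ≥ n` and vanishes;
the remaining ones vanish by the support assumption. Characters span a dense subspace of `L²(σ)`
(Stone–Weierstrass), so `f = 0` σ-a.e., hence μ-a.e. since `μ ≪ σ`.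
-/

open scoped ComplexConjugate

theorem MeasureTheory.Measure.le_smul_withDensity {α : Type*} [MeasurableSpace α]
    (μ : Measure α) {ρ : α → ENNReal} (hρ : Measurable ρ) {c : ENNReal}
    (h : ∀ x, 1 ≤ c * ρ x) :
    μ ≤ c • μ.withDensity ρ :=
  calc μ = μ.withDensity 1 := withDensity_one.symm
    _ ≤ μ.withDensity (c • ρ) := withDensity_mono (ae_of_all _ h)
    _ = c • μ.withDensity ρ := withDensity_smul c hρ

section InverseNormSqDensity

variable {X : Type*} [MeasurableSpace X] {σ : Measure X} {φ : X → ℂ}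

-- Where `φ x = 0` both integrands vanish, as `(0 ^ 2)⁻¹ = 0` and `g x / 0 = 0`.
theorem integral_withDensity_inv_norm_sq (hφ : Measurable φ) (g : X → ℂ) :
    ∫ x, g x ∂σ.withDensity (fun x => ENNReal.ofReal ((‖φ x‖ ^ 2)⁻¹)) =
      ∫ x, g x / (φ x * conj (φ x)) ∂σ := by
  rw [integral_withDensity_eq_integral_toReal_smul (by fun_prop)
    (ae_of_all _ fun _ => ENNReal.ofReal_lt_top)]
  refine integral_congr_ae (ae_of_all _ fun x => ?_)
  dsimp only
  rw [ENNReal.toReal_ofReal (by positivity), Complex.real_smul, Complex.mul_conj',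
    div_eq_inv_mul]
  push_cast
  rfl

theorem MeasureTheory.MemLp.of_withDensity_inv_norm_sq {p : ENNReal} (hφ : Measurable φ)
    (hφ0 : ∀ x, φ x ≠ 0) {M : ℝ} (hM : ∀ x, ‖φ x‖ ≤ M) {f : X → ℂ}
    (hf : MemLp f p (σ.withDensity fun x => ENNReal.ofReal ((‖φ x‖ ^ 2)⁻¹))) :
    MemLp f p σ := by
  refine hf.of_measure_le_smul ENNReal.ofReal_ne_top
    (σ.le_smul_withDensity (c := ENNReal.ofReal (M ^ 2)) (by fun_prop) fun x => ?_)
  have hx : 0 < ‖φ x‖ := norm_pos_iff.mpr (hφ0 x)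
  rw [← ENNReal.ofReal_mul (by positivity), ← div_eq_mul_inv, ENNReal.one_le_ofReal,
    one_le_div (by positivity)]
  exact pow_le_pow_left₀ hx.le (hM x) 2

end InverseNormSqDensity

namespace Torus

open Submodule

variable {d : ℕ}

noncomputable def character (γ : Fin d → ℤ) : C(Fin d → Circle, ℂ) where
  toFun z := ((∏ j, z j ^ γ j : Circle) : ℂ)
  continuous_toFun := by fun_prop

@[simp]
theorem character_apply (γ : Fin d → ℤ) (z : Fin d → Circle) :
    character γ z = ∏ j, (z j : ℂ) ^ γ j :=
  map_prod Circle.coeHom _ _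

theorem character_add (γ γ' : Fin d → ℤ) :
    character (γ + γ') = character γ * character γ' := by
  ext z
  simp only [character_apply, ContinuousMap.mul_apply, Pi.add_apply, ← prod_mul_distrib]
  exact prod_congr rfl fun j _ => zpow_add₀ (Circle.coe_ne_zero _) _ _

theorem character_zero : character (0 : Fin d → ℤ) = 1 := by
  ext z; simp

theorem star_character (γ : Fin d → ℤ) : star (character γ) = character (-γ) := by
  ext z
  simp [← Circle.coe_inv_eq_conj]

theorem norm_character_apply (γ : Fin d → ℤ) (z : Fin d → Circle) : ‖character γ z‖ = 1 := by
  simp [norm_prod, Circle.norm_coe]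

noncomputable def characterAlgebra (d : ℕ) : StarSubalgebra ℂ C(Fin d → Circle, ℂ) where
  toSubalgebra := Algebra.adjoin ℂ (Set.range character)
  star_mem' := by
    show Algebra.adjoin ℂ (Set.range character) ≤ star (Algebra.adjoin ℂ (Set.range character))
    refine Algebra.adjoin_le ?_
    rintro - ⟨γ, rfl⟩
    exact Algebra.subset_adjoin ⟨-γ, (star_character γ).symm⟩

theorem characterAlgebra_toSubmodule (d : ℕ) :
    Subalgebra.toSubmodule (characterAlgebra d).toSubalgebra =
      span ℂ (Set.range (character (d := d))) := by
  refine Algebra.adjoin_eq_span_of_subset (hs := subset_trans ?_ subset_span)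
  intro x hx
  refine Submonoid.closure_induction (fun _ => id) ⟨0, character_zero⟩ ?_ hx
  rintro - - - - ⟨γ, rfl⟩ ⟨γ', rfl⟩
  exact ⟨γ + γ', character_add γ γ'⟩

theorem characterAlgebra_separatesPoints (d : ℕ) : (characterAlgebra d).SeparatesPoints := by
  intro z w hzw
  obtain ⟨j, hj⟩ := Function.ne_iff.mp hzw
  refine ⟨_, ⟨character (Pi.single j 1), Algebra.subset_adjoin ⟨_, rfl⟩, rfl⟩, ?_⟩
  have coord (u : Fin d → Circle) : character (Pi.single j 1) u = u j := by
    rw [character_apply, prod_eq_single j (fun i _ hi => by simp [Pi.single_eq_of_ne hi])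
      (by simp)]
    simp
  simpa only [coord] using fun h => hj (Circle.coe_injective h)

theorem span_character_closure_eq_top (d : ℕ) :
    (span ℂ (Set.range (character (d := d)))).topologicalClosure = ⊤ := by
  rw [← characterAlgebra_toSubmodule]
  exact congr_arg (Subalgebra.toSubmodule <| StarSubalgebra.toSubalgebra ·)
    (ContinuousMap.starSubalgebra_topologicalClosure_eq_top_of_separatesPoints _
      (characterAlgebra_separatesPoints d))

theorem span_characterLp_closure_eq_top (σ : Measure (Fin d → Circle)) [IsFiniteMeasure σ] :
    (span ℂ (Set.range fun γ =>
      ContinuousMap.toLp (E := ℂ) 2 σ ℂ (character γ))).topologicalClosure = ⊤ := by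
  convert (ContinuousMap.toLp_denseRange ℂ σ ℂ (by norm_num : (2 : ENNReal) ≠ ⊤)
    ).topologicalClosure_map_submodule (span_character_closure_eq_top d) using 2
  · rfl
  rw [map_span, ← Set.range_comp]
  rfl

noncomputable def fourierCoeff (σ : Measure (Fin d → Circle)) (f : (Fin d → Circle) → ℂ)
    (γ : Fin d → ℤ) : ℂ :=
  ∫ z, f z * conj (character γ z) ∂σ

theorem ae_eq_zero_of_fourierCoeff_eq_zero {σ : Measure (Fin d → Circle)} [IsFiniteMeasure σ]
    {f : (Fin d → Circle) → ℂ} (hf : MemLp f 2 σ) (h : ∀ γ, fourierCoeff σ f γ = 0) :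
    f =ᵐ[σ] 0 := by
  have inner_character (γ : Fin d → ℤ) :
      inner ℂ (ContinuousMap.toLp 2 σ ℂ (character γ)) (hf.toLp f) = fourierCoeff σ f γ := by
    rw [L2.inner_def, fourierCoeff]
    refine integral_congr_ae ?_
    filter_upwards [hf.coeFn_toLp, (character γ).coeFn_toLp (p := 2) (𝕜 := ℂ) σ] with z hF hχ
    rw [hF, hχ, RCLike.inner_apply', mul_comm]
  set F := hf.toLp f
  have hF : F ∈ (ℂ ∙ F)ᗮ := by
    refine topologicalClosure_minimal _ ?_ (ℂ ∙ F).isClosed_orthogonal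
      (span_characterLp_closure_eq_top σ ▸ mem_top)
    rw [span_le]
    rintro - ⟨γ, rfl⟩
    exact mem_orthogonal_singleton_iff_inner_left.mpr ((inner_character γ).trans (h γ))
  have hF0 : F = 0 := inner_self_eq_zero.mp (mem_orthogonal_singleton_iff_inner_left.mp hF)
  calc f =ᵐ[σ] F := hf.coeFn_toLp.symm
    _ =ᵐ[σ] 0 := by rw [hF0]; exact Lp.coeFn_zero _ _ _

noncomputable def evalPoly (p : MvPolynomial (Fin d) ℂ) : C(Fin d → Circle, ℂ) where
  toFun z := MvPolynomial.eval (fun j => (z j : ℂ)) p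
  continuous_toFun := (MvPolynomial.continuous_eval p).comp (by fun_prop)

theorem evalPoly_eq_sum (p : MvPolynomial (Fin d) ℂ) (z : Fin d → Circle) :
    evalPoly p z =
      ∑ m ∈ p.support, MvPolynomial.coeff m p * character (fun j => (m j : ℤ)) z := by
  simp [evalPoly, MvPolynomial.eval_eq']

theorem reflect_coe_eq (n : Fin d → ℕ) (p : MvPolynomial (Fin d) ℂ) (z : Fin d → Circle) :
    reflect n p (fun j => (z j : ℂ)) =
      character (fun j => (n j : ℤ)) z * conj (evalPoly p z) := by
  simp [reflect, evalPoly, ← Circle.coe_inv_eq_conj]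

theorem fourierCoeff_mul_conj_evalPoly {σ : Measure (Fin d → Circle)}
    {g : (Fin d → Circle) → ℂ} (hg : Integrable g σ) (p : MvPolynomial (Fin d) ℂ)
    (γ : Fin d → ℤ) :
    fourierCoeff σ (fun z => g z * conj (evalPoly p z)) γ =
      ∑ m ∈ p.support,
        conj (MvPolynomial.coeff m p) * fourierCoeff σ g (γ + fun j => (m j : ℤ)) := by
  have hint (γ' : Fin d → ℤ) : Integrable (fun z => g z * conj (character γ' z)) σ :=
    hg.mul_bdd (by fun_prop) (ae_of_all _ fun z =>
      (by rw [RCLike.norm_conj, norm_character_apply] : ‖conj (character γ' z)‖ = 1).le)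
  simp_rw [fourierCoeff, ← integral_const_mul,
    ← integral_finsetSum _ fun m _ => (hint _).const_mul _]
  congr 1
  ext z
  rw [evalPoly_eq_sum, map_sum, mul_sum, sum_mul]
  refine sum_congr rfl fun m _ => ?_
  rw [character_add, ContinuousMap.mul_apply]
  simp only [map_mul]
  ring

theorem integral_mul_conj_reflect (σ : Measure (Fin d → Circle)) (p : MvPolynomial (Fin d) ℂ)
    (hp : ∀ z, evalPoly p z ≠ 0) (f : (Fin d → Circle) → ℂ) (n β : Fin d → ℕ) :
    ∫ z, f z * conj ((∏ j, (z j : ℂ) ^ β j) * reflect n p (fun j => (z j : ℂ)))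
        ∂σ.withDensity (fun z => ENNReal.ofReal ((‖evalPoly p z‖ ^ 2)⁻¹)) =
      fourierCoeff σ (fun z => f z / conj (evalPoly p z)) (fun j => n j + β j) := by
  rw [integral_withDensity_inv_norm_sq (evalPoly p).measurable, fourierCoeff]
  refine integral_congr_ae (ae_of_all _ fun z => ?_)
  have hz := hp z
  have hz' : conj (evalPoly p z) ≠ 0 := (map_ne_zero _).mpr hz
  simp only [reflect_coe_eq, character_apply, zpow_add₀ (Circle.coe_ne_zero _), zpow_natCast,
    prod_mul_distrib, map_mul, conj_conj]
  field_simp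

end Torus

open Torus in
theorem orthogonal_to_reflected_shifts_eq_zero_general (d : ℕ) (n : Fin d → ℕ)
    (p : MvPolynomial (Fin d) ℂ)
    (hp : ∀ z : Fin d → ℂ, (∀ j, ‖z j‖ ≤ 1) → MvPolynomial.eval z p ≠ 0)
    -- `σ` is the normalized Haar (Lebesgue) measure on the `d`-torus
    (σ : Measure (Fin d → Circle)) [IsProbabilityMeasure σ]
    -- `μ` is the Bernstein–Szegő measure `|p|⁻² dσ`
    (μ : Measure (Fin d → Circle))
    (hμ : μ = σ.withDensity (fun z =>
      ENNReal.ofReal ((‖MvPolynomial.eval (fun j => (z j : ℂ)) p‖ ^ 2)⁻¹)))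
    (f : (Fin d → Circle) → ℂ) (hf : MemLp f 2 μ)
    -- the Fourier support of `f` is contained in `{α ∈ ℤ₊^d : α ≥ n}`
    (hsupp : ∀ α : Fin d → ℤ, ¬ (∀ j, (n j : ℤ) ≤ α j) →
      ∫ z : Fin d → Circle, f z * (starRingEnd ℂ) (∏ j, (z j : ℂ) ^ α j) ∂σ = 0)
    -- `f` is orthogonal in `L²(μ)` to `z^β·p̃` for every `β ∈ ℤ₊^d`
    (horth : ∀ β : Fin d → ℕ,
      ∫ z : Fin d → Circle,
        f z * (starRingEnd ℂ)
          ((∏ j, (z j : ℂ) ^ β j) * reflect n p (fun j => (z j : ℂ))) ∂μ = 0) :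
    f =ᵐ[μ] 0 := by
  subst hμ
  set P := evalPoly p
  have hP (z : Fin d → Circle) : P z ≠ 0 := hp _ fun j => (Circle.norm_coe _).le
  have hP' (z : Fin d → Circle) : conj (P z) ≠ 0 := (map_ne_zero _).mpr (hP z)
  obtain ⟨M, hM⟩ := isCompact_univ.exists_bound_of_continuousOn P.continuous.continuousOn
  obtain ⟨C, hC⟩ := isCompact_univ.exists_bound_of_continuousOn
    ((continuous_star.comp P.continuous).inv₀ hP').continuousOn
  have hfσ : MemLp f 2 σ := hf.of_withDensity_inv_norm_sq P.measurable hP fun z => hM z trivial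
  set g := fun z => f z / conj (P z)
  have hg : Integrable g σ :=
    (hfσ.integrable one_le_two).mul_bdd (by fun_prop) (ae_of_all _ fun z => hC z trivial)
  have hg_coeff (γ : Fin d → ℤ) (hγ : ∀ j, (n j : ℤ) ≤ γ j) : Torus.fourierCoeff σ g γ = 0 := by
    obtain ⟨β, rfl⟩ : ∃ β : Fin d → ℕ, γ = fun j => (n j : ℤ) + β j :=
      ⟨fun j => (γ j - n j).toNat, funext fun j => by have := hγ j; dsimp only; omega⟩
    rw [← integral_mul_conj_reflect σ p hP f n β]
    exact horth β
  have hf_coeff (γ : Fin d → ℤ) : Torus.fourierCoeff σ f γ = 0 := by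
    by_cases hγ : ∀ j, (n j : ℤ) ≤ γ j
    · have hfg : f = fun z => g z * conj (P z) :=
        funext fun z => (div_mul_cancel₀ _ (hP' z)).symm
      rw [hfg, fourierCoeff_mul_conj_evalPoly hg]
      refine sum_eq_zero fun m _ => ?_
      rw [hg_coeff _ fun j => by have := hγ j; simp only [Pi.add_apply]; omega, mul_zero]
    · simpa only [Torus.fourierCoeff, character_apply] using hsupp γ hγ
  exact (withDensity_absolutelyContinuous σ _).ae_le
    (ae_eq_zero_of_fourierCoeff_eq_zero hfσ hf_coeff)

theorem orthogonal_to_reflected_shifts_eq_zero (d : ℕ) (n : Fin d → ℕ)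
    (p : MvPolynomial (Fin d) ℂ)
    (hdeg : ∀ m ∈ p.support, ∀ j, m j ≤ n j)
    (h0 : MvPolynomial.eval (0 : Fin d → ℂ) p ≠ 0)
    (hp : ∀ z : Fin d → ℂ, (∀ j, ‖z j‖ ≤ 1) → MvPolynomial.eval z p ≠ 0)
    -- `σ` is the normalized Haar (Lebesgue) measure on the `d`-torus
    (σ : Measure (Fin d → Circle)) [σ.IsHaarMeasure] [IsProbabilityMeasure σ]
    -- `μ` is the Bernstein–Szegő measure `|p|⁻² dσ`
    (μ : Measure (Fin d → Circle))
    (hμ : μ = σ.withDensity (fun z =>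
      ENNReal.ofReal ((‖MvPolynomial.eval (fun j => (z j : ℂ)) p‖ ^ 2)⁻¹)))
    (f : (Fin d → Circle) → ℂ) (hf : MemLp f 2 μ)
    -- the Fourier support of `f` is contained in `{α ∈ ℤ₊^d : α ≥ n}`
    (hsupp : ∀ α : Fin d → ℤ, ¬ (∀ j, (n j : ℤ) ≤ α j) →
      ∫ z : Fin d → Circle, f z * (starRingEnd ℂ) (∏ j, (z j : ℂ) ^ α j) ∂σ = 0)
    -- `f` is orthogonal in `L²(μ)` to `z^β·p̃` for every `β ∈ ℤ₊^d`
    (horth : ∀ β : Fin d → ℕ,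
      ∫ z : Fin d → Circle,
        f z * (starRingEnd ℂ)
          ((∏ j, (z j : ℂ) ^ β j) * reflect n p (fun j => (z j : ℂ))) ∂μ = 0) :
    f =ᵐ[μ] 0 :=
  orthogonal_to_reflected_shifts_eq_zero_general d n p hp σ μ hμ f hf hsupp horth
end

section
/- Let K be a positive semi-definite kernel on a set Ω, fix η ∈ Ω, and let f(z) = K(z,η). Then for ε > 0, the kernel K(z,ζ) − ε·f(z)·conj(f(ζ)) is positive semi-definite if and only if ε·K(η,η) ≤ 1. -/
/-!
Writing `T = ∑ i, c i * K (z i) η`, the quadratic form of the new kernel at `(z, c)` is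
`S - ε |T|²`, where `S` is that of `K`. Testing at the single point `η` forces
`ε K(η,η)² ≤ K(η,η)`. Conversely, for `ε > 0` positivity of `K` on `z` extended by `η`, with
weight `-ε T` at `η`, gives `S - ε |T|² ≥ ε |T|² (1 - ε K(η,η)) ≥ 0`.
-/

open Complex Finset ComplexOrder

/-- A kernel `K` on a set `Ω` is positive semi-definite. -/
def IsPSDKernel {Ω : Type*} (K : Ω → Ω → ℂ) : Prop :=
  ∀ (m : ℕ) (z : Fin m → Ω) (c : Fin m → ℂ),
    0 ≤ ∑ i, ∑ j, c i * (starRingEnd ℂ) (c j) * K (z i) (z j)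

open ComplexConjugate

section

variable {Ω : Type*}

def kernelForm {m : ℕ} (K : Ω → Ω → ℂ) (z : Fin m → Ω) (c : Fin m → ℂ) : ℂ :=
  ∑ i, ∑ j, c i * conj (c j) * K (z i) (z j)

theorem isPSDKernel_iff_kernelForm_nonneg {K : Ω → Ω → ℂ} :
    IsPSDKernel K ↔ ∀ (m : ℕ) (z : Fin m → Ω) (c : Fin m → ℂ), 0 ≤ kernelForm K z c :=
  Iff.rfl

theorem kernelForm_sub_rankOne {m : ℕ} (K : Ω → Ω → ℂ) (f : Ω → ℂ) (w : ℂ)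
    (z : Fin m → Ω) (c : Fin m → ℂ) :
    kernelForm (fun x y => K x y - w * f x * conj (f y)) z c =
      kernelForm K z c - w * normSq (∑ i, c i * f (z i)) := by
  have rankOne : ∑ i, ∑ j, c i * conj (c j) * (w * f (z i) * conj (f (z j))) =
      w * ((∑ i, c i * f (z i)) * conj (∑ j, c j * f (z j))) := by
    rw [map_sum, sum_mul_sum, mul_sum]
    refine sum_congr rfl fun i _ => ?_
    rw [mul_sum]
    exact sum_congr rfl fun j _ => by rw [map_mul]; ring
  simp only [kernelForm, mul_sub, sum_sub_distrib, rankOne, mul_conj]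

theorem isPSDKernel_sub_rankOne_iff (K : Ω → Ω → ℂ) (f : Ω → ℂ) (w : ℂ) :
    IsPSDKernel (fun x y => K x y - w * f x * conj (f y)) ↔
      ∀ (m : ℕ) (z : Fin m → Ω) (c : Fin m → ℂ),
        w * normSq (∑ i, c i * f (z i)) ≤ kernelForm K z c := by
  simp only [isPSDKernel_iff_kernelForm_nonneg, kernelForm_sub_rankOne, sub_nonneg]

theorem kernelForm_snoc {m : ℕ} (K : Ω → Ω → ℂ) (z : Fin m → Ω) (c : Fin m → ℂ)
    (η : Ω) (t : ℂ) :
    kernelForm K (Fin.snoc z η : Fin (m + 1) → Ω) (Fin.snoc c t : Fin (m + 1) → ℂ) =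
      kernelForm K z c + conj t * ∑ i, c i * K (z i) η + t * ∑ j, conj (c j) * K η (z j) +
        t * conj t * K η η := by
  simp only [kernelForm, Fin.sum_univ_castSucc, Fin.snoc_castSucc, Fin.snoc_last,
    sum_add_distrib, mul_sum]
  have row : ∑ j, t * conj (c j) * K η (z j) = ∑ j, t * (conj (c j) * K η (z j)) :=
    sum_congr rfl fun _ _ => mul_assoc _ _ _
  have col : ∑ i, c i * conj t * K (z i) η = ∑ i, conj t * (c i * K (z i) η) :=
    sum_congr rfl fun _ _ => by ring
  rw [row, col]
  ring

namespace IsPSDKernel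

variable {K : Ω → Ω → ℂ}

theorem diag_nonneg (hK : IsPSDKernel K) (x : Ω) : 0 ≤ K x x := by
  simpa using hK 1 ![x] ![1]

theorem ofReal_re_diag (hK : IsPSDKernel K) (x : Ω) : ((K x x).re : ℂ) = K x x :=
  (eq_re_of_ofReal_le (hK.diag_nonneg x)).symm

theorem conj_apply (hK : IsPSDKernel K) (x y : Ω) : conj (K x y) = K y x := by
  have hx := (hK.diag_nonneg x).2
  have hy := (hK.diag_nonneg y).2
  have h1 := (hK 2 ![x, y] ![1, 1]).2
  have h2 := (hK 2 ![x, y] ![1, I]).2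
  simp [Fin.sum_univ_two, mul_im] at hx hy h1 h2
  apply Complex.ext <;> simp only [conj_re, conj_im] <;> linarith

theorem ofReal_mul_normSq_le (hK : IsPSDKernel K) (η : Ω) {ε : ℝ} (hle : ε * (K η η).re ≤ 1)
    {m : ℕ} (z : Fin m → Ω) (c : Fin m → ℂ) :
    (ε : ℂ) * normSq (∑ i, c i * K (z i) η) ≤ kernelForm K z c := by
  set T := ∑ i, c i * K (z i) η
  rcases le_or_gt ε 0 with hε0 | hε0
  · calc (ε : ℂ) * normSq T = ((ε * normSq T : ℝ) : ℂ) := by push_cast; ring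
      _ ≤ 0 := by exact_mod_cast mul_nonpos_of_nonpos_of_nonneg hε0 (normSq_nonneg T)
      _ ≤ kernelForm K z c := hK m z c
  have hrow : ∑ j, conj (c j) * K η (z j) = conj T := by
    simp only [T, map_sum, map_mul, hK.conj_apply]
  have hsnoc := isPSDKernel_iff_kernelForm_nonneg.1 hK (m + 1) (Fin.snoc z η)
    (Fin.snoc c (-ε * T))
  rw [kernelForm_snoc, hrow] at hsnoc
  have hslack : (0 : ℂ) ≤ ((ε * normSq T * (1 - ε * (K η η).re) : ℝ) : ℂ) := by
    exact_mod_cast mul_nonneg (mul_nonneg hε0.le (normSq_nonneg T)) (by linarith)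
  rw [← sub_nonneg]
  convert add_nonneg hsnoc hslack using 1
  rw [← hK.ofReal_re_diag η]
  simp only [map_mul, map_neg, conj_ofReal]
  push_cast
  linear_combination (2 * (ε : ℂ) - ε ^ 2 * (K η η).re) * mul_conj T

end IsPSDKernel

end

theorem psd_sub_kernelFunction_iff_general {Ω : Type*} (K : Ω → Ω → ℂ)
    (hK : IsPSDKernel K) (η : Ω) (ε : ℝ) :
    IsPSDKernel (fun z ζ =>
        K z ζ - (ε : ℂ) * K z η * (starRingEnd ℂ) (K ζ η)) ↔
      ε * (K η η).re ≤ 1 := by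
  rw [isPSDKernel_sub_rankOne_iff K (fun z => K z η)]
  refine ⟨fun h => ?_, fun h m z c => hK.ofReal_mul_normSq_le η h z c⟩
  have hdiag := h 1 ![η] ![1]
  simp only [kernelForm, Fin.sum_univ_one, Matrix.cons_val_zero, one_mul, map_one] at hdiag
  rw [← hK.ofReal_re_diag η, normSq_ofReal, ← ofReal_mul, real_le_real] at hdiag
  rcases (nonneg_iff.1 (hK.diag_nonneg η)).1.eq_or_lt with hzero | hpos
  · rw [← hzero]; linarith
  · nlinarith

theorem psd_sub_kernelFunction_iff {Ω : Type*} (K : Ω → Ω → ℂ)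
    (hK : IsPSDKernel K) (η : Ω) (ε : ℝ) (hε : 0 < ε) :
    IsPSDKernel (fun z ζ =>
        K z ζ - (ε : ℂ) * K z η * (starRingEnd ℂ) (K ζ η)) ↔
      ε * (K η η).re ≤ 1 :=
  psd_sub_kernelFunction_iff_general K hK η ε
end

section
/- Let d ≥ 2, f : D^d → C holomorphic with |f| ≤ 1, and fix j ≠ k in {1,...,d}. Suppose S ⊔ T = {1,...,d} with j ∈ S, k ∈ T, and suppose K_S, L_T are positive semi-definite kernels with K_S j-contractive, L_T k-contractive, and (1 − f(z)conj(f(ζ)))/∏_{r=1}^d (1 − z_r conj(ζ_r)) = K_S + L_T. Then there exist positive semi-definite kernels K, K' on D^d with 1 − f(z)conj(f(ζ)) = ∏_{r≠j}(1 − z_r conj(ζ_r))·K(z,ζ) + ∏_{r≠k}(1 − z_r conj(ζ_r))·K'(z,ζ). -/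
open Complex Finset ComplexOrder

/-- The open unit polydisk in `ℂ^d`. -/
def Polydisk (d : ℕ) : Set (Fin d → ℂ) := {z | ∀ j, ‖z j‖ < 1}

/-- A kernel `K` on the polydisk is `j`-contractive: `(1 - z_j conj(ζ_j)) K` is PSD. -/
def JContractive (d : ℕ) (j : Fin d) (K : (Fin d → ℂ) → (Fin d → ℂ) → ℂ) : Prop :=
  IsPSDKernelOn (Polydisk d)
    (fun z ζ => (1 - z j * (starRingEnd ℂ) (ζ j)) * K z ζ)

/-!
The contractivity hypotheses say precisely that `K := (1 - z_j ζ̄_j) K_S` and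
`K' := (1 - z_k ζ̄_k) L_T` are positive semi-definite. Multiplying the splitting by the
non-vanishing product `∏_r (1 - z_r ζ̄_r)` and absorbing the `j`-th factor into `K_S` and the
`k`-th factor into `L_T` gives the required decomposition of `1 - f(z) f̄(ζ)`.
-/

lemma one_sub_mul_conj_ne_zero_s18 {a b : ℂ} (ha : ‖a‖ < 1) (hb : ‖b‖ < 1) :
    1 - a * (starRingEnd ℂ) b ≠ 0 := by
  have hlt : ‖a * (starRingEnd ℂ) b‖ < 1 := by
    rw [norm_mul, RCLike.norm_conj]
    exact mul_lt_one_of_nonneg_of_lt_one_left (norm_nonneg a) ha hb.le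
  refine sub_ne_zero.mpr fun h => ?_
  simp [← h] at hlt

lemma prod_one_sub_mul_conj_ne_zero {d : ℕ} {z ζ : Fin d → ℂ} (hz : z ∈ Polydisk d)
    (hζ : ζ ∈ Polydisk d) : ∏ r, (1 - z r * (starRingEnd ℂ) (ζ r)) ≠ 0 :=
  prod_ne_zero_iff.mpr fun r _ => one_sub_mul_conj_ne_zero_s18 (hz r) (hζ r)

lemma prod_mul_add_eq_prod_erase_mul_add_prod_erase_mul {ι R : Type*} [Fintype ι]
    [DecidableEq ι] [CommSemiring R] (g : ι → R) (j k : ι) (a b : R) :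
    (∏ r, g r) * (a + b) =
      (∏ r ∈ univ.erase j, g r) * (g j * a) + (∏ r ∈ univ.erase k, g r) * (g k * b) := by
  rw [← mul_assoc, ← mul_assoc, prod_erase_mul _ _ (mem_univ j),
    prod_erase_mul _ _ (mem_univ k), mul_add]

theorem gkvw_from_splitting_general (d : ℕ)
    (f : (Fin d → ℂ) → ℂ)
    (j k : Fin d)
    (KS LT : (Fin d → ℂ) → (Fin d → ℂ) → ℂ)
    (hKSj : JContractive d j KS) (hLTk : JContractive d k LT)
    (hsum : ∀ z ∈ Polydisk d, ∀ ζ ∈ Polydisk d,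
      (1 - f z * (starRingEnd ℂ) (f ζ)) /
          ∏ r, (1 - z r * (starRingEnd ℂ) (ζ r)) = KS z ζ + LT z ζ) :
    ∃ K K' : (Fin d → ℂ) → (Fin d → ℂ) → ℂ,
      IsPSDKernelOn (Polydisk d) K ∧ IsPSDKernelOn (Polydisk d) K' ∧
      ∀ z ∈ Polydisk d, ∀ ζ ∈ Polydisk d,
        1 - f z * (starRingEnd ℂ) (f ζ) =
          (∏ r ∈ Finset.univ.erase j, (1 - z r * (starRingEnd ℂ) (ζ r))) * K z ζ +
          (∏ r ∈ Finset.univ.erase k, (1 - z r * (starRingEnd ℂ) (ζ r))) * K' z ζ := by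
  refine ⟨fun z ζ => (1 - z j * (starRingEnd ℂ) (ζ j)) * KS z ζ,
    fun z ζ => (1 - z k * (starRingEnd ℂ) (ζ k)) * LT z ζ, hKSj, hLTk, fun z hz ζ hζ => ?_⟩
  rw [← prod_mul_add_eq_prod_erase_mul_add_prod_erase_mul, ← hsum z hz ζ hζ,
    mul_div_cancel₀ _ (prod_one_sub_mul_conj_ne_zero hz hζ)]

theorem gkvw_from_splitting (d : ℕ) (hd : 2 ≤ d)
    (f : (Fin d → ℂ) → ℂ)
    (hf : DifferentiableOn ℂ f (Polydisk d))
    (hb : ∀ z ∈ Polydisk d, ‖f z‖ ≤ 1)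
    (j k : Fin d) (hjk : j ≠ k)
    (S T : Set (Fin d)) (hST : S ∪ T = Set.univ) (hdisj : S ∩ T = ∅)
    (hj : j ∈ S) (hk : k ∈ T)
    (KS LT : (Fin d → ℂ) → (Fin d → ℂ) → ℂ)
    (hKS : IsPSDKernelOn (Polydisk d) KS) (hLT : IsPSDKernelOn (Polydisk d) LT)
    (hKSj : JContractive d j KS) (hLTk : JContractive d k LT)
    (hsum : ∀ z ∈ Polydisk d, ∀ ζ ∈ Polydisk d,
      (1 - f z * (starRingEnd ℂ) (f ζ)) /
          ∏ r, (1 - z r * (starRingEnd ℂ) (ζ r)) = KS z ζ + LT z ζ) :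
    ∃ K K' : (Fin d → ℂ) → (Fin d → ℂ) → ℂ,
      IsPSDKernelOn (Polydisk d) K ∧ IsPSDKernelOn (Polydisk d) K' ∧
      ∀ z ∈ Polydisk d, ∀ ζ ∈ Polydisk d,
        1 - f z * (starRingEnd ℂ) (f ζ) =
          (∏ r ∈ Finset.univ.erase j, (1 - z r * (starRingEnd ℂ) (ζ r))) * K z ζ +
          (∏ r ∈ Finset.univ.erase k, (1 - z r * (starRingEnd ℂ) (ζ r))) * K' z ζ :=
  gkvw_from_splitting_general d f j k KS LT hKSj hLTk hsum
end
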